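/- Let a, b ∈ ℝ and define the sequences x_1 = (a + √(a² + 8))/2, y_1 = (s + √(s² + 6))/2 where s = b − (|a| + √2)/2, and recursively x_{n+1} = (A_n + √(A_n² + 8))/2 with A_n = a − 1/y_n + 1/(x_n + y_n), y_{n+1} = (B_n + √(B_n² + 8))/2 with B_n = b − 1/x_n + 1/(x_n + y_n). Then the odd-indexed subsequences and even-indexed subsequences are interleaved monotone: for every n ≥ 1, x_{2n−1} > x_{2n+1}, x_{2n} < x_{2n+2}, y_{2n−1} < y_{2n+1}, and y_{2n} > y_{2n+2}. -/

import Mathlib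

/-- The iterative scheme of Proposition 4.2: `dysonSeq a b n = (x_{n+1}, y_{n+1})`,
i.e. `dysonSeq a b 0` is the pair `(x_1, y_1)` of the proposition. -/
noncomputable def dysonSeq (a b : ℝ) : ℕ → ℝ × ℝ
  | 0 =>
      ((a + Real.sqrt (a ^ 2 + 8)) / 2,
        ((b - (|a| + Real.sqrt 2) / 2)
          + Real.sqrt ((b - (|a| + Real.sqrt 2) / 2) ^ 2 + 6)) / 2)
  | n + 1 =>
      let p := dysonSeq a b n
      let A := a - 1 / p.2 + 1 / (p.1 + p.2)
      let B := b - 1 / p.1 + 1 / (p.1 + p.2)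
      ((A + Real.sqrt (A ^ 2 + 8)) / 2, (B + Real.sqrt (B ^ 2 + 8)) / 2)

/-!
The step map `F (x, y) = (φ₈ (a - 1/y + 1/(x+y)), φ₈ (b - 1/x + 1/(x+y)))`, with
`φ_c t = (t + √(t² + c))/2`, reverses the relation "`x` smaller and `y` larger": the correction
`1/y - 1/(x+y) = x / (y (x+y))` increases in `x` and decreases in `y`, and `φ_c` is increasing.
Hence `F ∘ F` preserves that relation, and by induction everything reduces to the base case
`x₃ < x₁`, `y₁ < y₃`. The first inequality holds because every argument `A_n` is below `a`.
The second is where the shape of `y₁` enters: from `x₂ (x₂ - A₁) = 2` and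
`x₁ - a ≤ |a| + √2` one gets `B₂ > s - 1/(2 y₁)`, so `y₁ (y₁ - B₂) < 3/2 + 1/2 = 2`.
-/

noncomputable def posRoot (c t : ℝ) : ℝ := (t + √(t ^ 2 + c)) / 2

section posRoot

variable {c : ℝ}

lemma posRoot_pos (hc : 0 < c) (t : ℝ) : 0 < posRoot c t := by
  have : -t < √(t ^ 2 + c) := Real.lt_sqrt_of_sq_lt (by nlinarith)
  unfold posRoot
  linarith

lemma posRoot_mul_sub_self (hc : 0 ≤ c) (t : ℝ) : posRoot c t * (posRoot c t - t) = c / 4 := by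
  have : √(t ^ 2 + c) ^ 2 = t ^ 2 + c := Real.sq_sqrt (by positivity)
  unfold posRoot
  linear_combination this / 4

/-- `posRoot c t` is the positive root of `u (u - t) = c / 4`, and `u ↦ u (u - t)` is
increasing on `u > t / 2`. -/
lemma lt_posRoot (hc : 0 < c) {t u : ℝ} (hu : 0 < u) (h : u * (u - t) < c / 4) :
    u < posRoot c t := by
  have hroot := posRoot_mul_sub_self hc.le t
  have hpos := posRoot_pos hc t
  have hgap : 0 < posRoot c t - t := pos_of_mul_pos_right (by linarith) hpos.le
  by_contra! hle
  nlinarith [mul_nonneg (sub_nonneg.2 hle) (by linarith : (0 : ℝ) ≤ u + posRoot c t - t)]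

lemma posRoot_strictMono (hc : 0 < c) : StrictMono (posRoot c) := fun t t' htt' =>
  lt_posRoot hc (posRoot_pos hc t) <| by
    nlinarith [posRoot_mul_sub_self hc.le t, posRoot_pos hc t]

lemma posRoot_eight_sub_self_le (t : ℝ) : posRoot 8 t - t ≤ |t| + √2 := by
  have hsqrt : √(t ^ 2 + 8) ≤ |t| + 2 * √2 := by
    rw [Real.sqrt_le_left (by positivity)]
    nlinarith [Real.sq_sqrt (show (0 : ℝ) ≤ 2 by norm_num), sq_abs t, abs_nonneg t,
      Real.sqrt_nonneg 2]
  have := neg_abs_le t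
  unfold posRoot
  linarith

end posRoot

lemma one_div_sub_one_div_add_lt {x x' y y' : ℝ} (hx : 0 < x) (hy' : 0 < y') (hxx' : x < x')
    (hy'y : y' < y) : 1 / y - 1 / (x + y) < 1 / y' - 1 / (x' + y') := by
  have hx' : 0 < x' := hx.trans hxx'
  have hy : 0 < y := hy'.trans hy'y
  calc 1 / y - 1 / (x + y) < 1 / y - 1 / (x' + y) := by gcongr
    _ = x' / (y * (x' + y)) := by field_simp; ring
    _ < x' / (y' * (x' + y')) := by gcongr
    _ = 1 / y' - 1 / (x' + y') := by field_simp; ring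

noncomputable def dysonStep (a b : ℝ) (p : ℝ × ℝ) : ℝ × ℝ :=
  (posRoot 8 (a - 1 / p.2 + 1 / (p.1 + p.2)), posRoot 8 (b - 1 / p.1 + 1 / (p.1 + p.2)))

lemma dysonStep_fst_lt (a b : ℝ) {p : ℝ × ℝ} (hp₁ : 0 < p.1) (hp₂ : 0 < p.2) :
    (dysonStep a b p).1 < posRoot 8 a := by
  refine posRoot_strictMono (by norm_num) ?_
  have : 1 / (p.1 + p.2) < 1 / p.2 := by gcongr; linarith
  linarith

lemma dysonStep_reverse (a b : ℝ) {p q : ℝ × ℝ} (hp : 0 < p.1) (hq : 0 < q.2)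
    (h₁ : p.1 < q.1) (h₂ : q.2 < p.2) :
    (dysonStep a b q).1 < (dysonStep a b p).1 ∧ (dysonStep a b p).2 < (dysonStep a b q).2 := by
  have hA := one_div_sub_one_div_add_lt hp hq h₁ h₂
  have hB := one_div_sub_one_div_add_lt hq hp h₂ h₁
  rw [add_comm q.2, add_comm p.2] at hB
  exact ⟨posRoot_strictMono (by norm_num) (by linarith),
    posRoot_strictMono (by norm_num) (by linarith)⟩

section dysonSeq

variable (a b : ℝ)

lemma dysonSeq_pos (n : ℕ) : 0 < (dysonSeq a b n).1 ∧ 0 < (dysonSeq a b n).2 := by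
  cases n <;> exact ⟨posRoot_pos (by norm_num) _, posRoot_pos (by norm_num) _⟩

lemma dysonSeq_reverse {m k : ℕ} (h₁ : (dysonSeq a b m).1 < (dysonSeq a b k).1)
    (h₂ : (dysonSeq a b k).2 < (dysonSeq a b m).2) :
    (dysonSeq a b (k + 1)).1 < (dysonSeq a b (m + 1)).1 ∧
      (dysonSeq a b (m + 1)).2 < (dysonSeq a b (k + 1)).2 :=
  dysonStep_reverse a b (dysonSeq_pos a b m).1 (dysonSeq_pos a b k).2 h₁ h₂

lemma dysonSeq_two_fst_lt : (dysonSeq a b 2).1 < (dysonSeq a b 0).1 :=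
  dysonStep_fst_lt a b (dysonSeq_pos a b 1).1 (dysonSeq_pos a b 1).2

lemma dysonSeq_zero_snd_lt : (dysonSeq a b 0).2 < (dysonSeq a b 2).2 := by
  obtain ⟨hx₁, hy₁⟩ := dysonSeq_pos a b 0
  obtain ⟨hx₂, hy₂⟩ := dysonSeq_pos a b 1
  set x₁ := (dysonSeq a b 0).1
  set y₁ := (dysonSeq a b 0).2
  set x₂ := (dysonSeq a b 1).1
  set y₂ := (dysonSeq a b 1).2
  set s := b - (|a| + √2) / 2 with hs
  set A₁ := a - 1 / y₁ + 1 / (x₁ + y₁) with hA₁_def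
  set B₂ := b - 1 / x₂ + 1 / (x₂ + y₂) with hB₂_def
  have hy₁_root : y₁ * (y₁ - s) = 3 / 2 :=
    (posRoot_mul_sub_self (by norm_num) s).trans (by norm_num)
  have hx₂_root : x₂ * (x₂ - A₁) = 2 :=
    (posRoot_mul_sub_self (by norm_num) A₁).trans (by norm_num)
  have hx₂_lt : x₂ < x₁ := dysonStep_fst_lt a b hx₁ hy₁
  have hx₁_sub : x₁ - a ≤ |a| + √2 := posRoot_eight_sub_self_le a
  have hA₁ : a - A₁ < 1 / y₁ := by
    have : 0 < 1 / (x₁ + y₁) := by positivity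
    linarith
  have hinv_x₂ : 1 / x₂ = (x₂ - A₁) / 2 := by
    rw [div_eq_div_iff hx₂.ne' two_ne_zero]
    linear_combination -hx₂_root
  have hB₂ : s - 1 / (2 * y₁) < B₂ := by
    have : 0 < 1 / (x₂ + y₂) := by positivity
    have : 1 / (2 * y₁) = 1 / y₁ / 2 := by field_simp
    linarith
  have : y₁ * (1 / (2 * y₁)) = 1 / 2 := by field_simp
  exact lt_posRoot (by norm_num) hy₁ (by nlinarith [mul_lt_mul_of_pos_left hB₂ hy₁])

lemma dysonSeq_even_reverse (m : ℕ) :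
    (dysonSeq a b (2 * m + 2)).1 < (dysonSeq a b (2 * m)).1 ∧
      (dysonSeq a b (2 * m)).2 < (dysonSeq a b (2 * m + 2)).2 := by
  induction m with
  | zero => exact ⟨dysonSeq_two_fst_lt a b, dysonSeq_zero_snd_lt a b⟩
  | succ m ih =>
    obtain ⟨h₁, h₂⟩ := dysonSeq_reverse a b ih.1 ih.2
    exact dysonSeq_reverse a b h₁ h₂

end dysonSeq

/-- Step 3 of the proof of Proposition 4.2. With the
convention `x_m = (dysonSeq a b (m-1)).1` and `y_m = (dysonSeq a b (m-1)).2`,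
for every `n ≥ 1`: `x_{2n-1} > x_{2n+1}`, `x_{2n} < x_{2n+2}`,
`y_{2n-1} < y_{2n+1}` and `y_{2n} > y_{2n+2}`. -/
theorem dysonSeq_interleaved_monotone (a b : ℝ) :
    ∀ n : ℕ, 1 ≤ n →
      (dysonSeq a b (2 * n - 2)).1 > (dysonSeq a b (2 * n)).1 ∧
      (dysonSeq a b (2 * n - 1)).1 < (dysonSeq a b (2 * n + 1)).1 ∧
      (dysonSeq a b (2 * n - 2)).2 < (dysonSeq a b (2 * n)).2 ∧
      (dysonSeq a b (2 * n - 1)).2 > (dysonSeq a b (2 * n + 1)).2 := by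
  intro n hn
  obtain ⟨m, rfl⟩ : ∃ m, n = m + 1 := ⟨n - 1, by omega⟩
  obtain ⟨hx_even, hy_even⟩ := dysonSeq_even_reverse a b m
  obtain ⟨hx_odd, hy_odd⟩ := dysonSeq_reverse a b hx_even hy_even
  rw [show 2 * (m + 1) - 2 = 2 * m by omega, show 2 * (m + 1) - 1 = 2 * m + 1 by omega,
    show 2 * (m + 1) = 2 * m + 2 by omega]
  exact ⟨hx_even, hx_odd, hy_even, hy_odd⟩
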